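/- arXiv:quant-ph/0105017 — 4 statements merged into one kernel-verified Lean document; each statement's English description precedes it below -/
import Mathlib

section
/- For all positive integers a and b with m = min(a, b), and every unit vector ψ in C^a ⊗ C^b, there exist nonnegative real numbers p_1, …, p_m summing to 1, an orthonormal family (a_i)_{i=1}^m in C^a, and an orthonormal family (b_i)_{i=1}^m in C^b, such that ψ = ∑_{i=1}^m √(p_i) · (a_i ⊗ b_i) (Schmidt decomposition). -/
open scoped BigOperators Classical ComplexOrder
open Matrix Kronecker Filter

noncomputable section

/-! ### Vectors and states -/

/-- The standard inner product on `ι → ℂ`. -/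
def cdot {ι : Type*} [Fintype ι] (u v : ι → ℂ) : ℂ := ∑ i, star (u i) * v i

/-- A unit vector. -/
def UnitVec {ι : Type*} [Fintype ι] (ψ : ι → ℂ) : Prop := cdot ψ ψ = 1

/-- An orthonormal family of vectors. -/
def OrthonormalFam {κ ι : Type*} [Fintype ι] (χ : κ → ι → ℂ) : Prop :=
  ∀ i j, cdot (χ i) (χ j) = if i = j then 1 else 0

/-- Tensor product of vectors in `C^a` and `C^b`. -/
def tensorVec {a b : ℕ} (u : Fin a → ℂ) (v : Fin b → ℂ) : Fin a × Fin b → ℂ :=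
  fun p => u p.1 * v p.2

/-- The rank-one operator `|ψ⟩⟨ψ|`. -/
def projVec {ι : Type*} (ψ : ι → ℂ) : Matrix ι ι ℂ :=
  Matrix.of fun p q => ψ p * star (ψ q)

/-- A (mixed) quantum state: a positive semidefinite matrix of trace one. -/
def IsState {ι : Type*} [Fintype ι] (ρ : Matrix ι ι ℂ) : Prop :=
  ρ.PosSemidef ∧ ρ.trace = 1

/-- A pure state: a rank-one projection `|ψ⟩⟨ψ|` onto a unit vector. -/
def IsPureState {ι : Type*} [Fintype ι] (ρ : Matrix ι ι ℂ) : Prop :=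
  ∃ ψ : ι → ℂ, UnitVec ψ ∧ ρ = projVec ψ

/-- A separable (disentangled) state: a finite convex combination of product states. -/
def IsSepState {a b : ℕ} (ρ : Matrix (Fin a × Fin b) (Fin a × Fin b) ℂ) : Prop :=
  ∃ (k : ℕ) (r : Fin k → ℝ) (ρA : Fin k → Matrix (Fin a) (Fin a) ℂ)
    (ρB : Fin k → Matrix (Fin b) (Fin b) ℂ),
    (∀ i, 0 ≤ r i) ∧ (∑ i, r i = 1) ∧
    (∀ i, (ρA i).PosSemidef ∧ (ρA i).trace = 1) ∧
    (∀ i, (ρB i).PosSemidef ∧ (ρB i).trace = 1) ∧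
    ρ = ∑ i, r i • (ρA i ⊗ₖ ρB i)

/-! ### Partial trace, Schmidt coefficients, reduced von Neumann entropy -/

/-- Partial trace over the second tensor factor. -/
def ptraceB {a b : ℕ} (ρ : Matrix (Fin a × Fin b) (Fin a × Fin b) ℂ) :
    Matrix (Fin a) (Fin a) ℂ :=
  Matrix.of fun i j => ∑ k : Fin b, ρ (i, k) (j, k)

theorem ptraceB_projVec_isHermitian {a b : ℕ} (ψ : Fin a × Fin b → ℂ) :
    (ptraceB (projVec ψ)).IsHermitian := by
  show (ptraceB (projVec ψ))ᴴ = ptraceB (projVec ψ)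
  ext i j
  simp only [Matrix.conjTranspose_apply, ptraceB, Matrix.of_apply, projVec, star_sum, star_mul',
    star_star]
  exact Finset.sum_congr rfl fun k _ => mul_comm _ _

/-- The Schmidt coefficients of a vector `ψ ∈ C^a ⊗ C^b`: the eigenvalues (with multiplicity)
of the partial trace over the second factor of `|ψ⟩⟨ψ|`. -/
def schmidtCoeffs {a b : ℕ} (ψ : Fin a × Fin b → ℂ) : Fin a → ℝ :=
  (ptraceB_projVec_isHermitian ψ).eigenvalues

/-- The reduced von Neumann entropy of the pure state `|ψ⟩⟨ψ|`. -/
def SvN {a b : ℕ} (ψ : Fin a × Fin b → ℂ) : ℝ :=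
  -∑ i, schmidtCoeffs ψ i * Real.logb 2 (schmidtCoeffs ψ i)

/-- The number of nonzero Schmidt coefficients. -/
def schmidtRank {a b : ℕ} (ψ : Fin a × Fin b → ℂ) : ℕ :=
  (Finset.univ.filter fun i => schmidtCoeffs ψ i ≠ 0).card

/-- The largest Schmidt coefficient. -/
def maxSchmidt {a b : ℕ} (ψ : Fin a × Fin b → ℂ) : ℝ := ⨆ i, schmidtCoeffs ψ i

/-- A representative of the maximally entangled state `P₊^d`: a pure state exactly `d` of whose
Schmidt coefficients are nonzero, all equal to `1/d`. -/
def IsMaxEntRep {a b : ℕ} (d : ℕ) (ρ : Matrix (Fin a × Fin b) (Fin a × Fin b) ℂ) : Prop :=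
  ∃ ψ : Fin a × Fin b → ℂ, UnitVec ψ ∧ ρ = projVec ψ ∧
    (∀ i, schmidtCoeffs ψ i = 0 ∨ schmidtCoeffs ψ i = 1 / d) ∧
    schmidtRank ψ = d

/-- The standard maximally entangled vector `Ψ₊ = (1/√d) ∑ᵢ eᵢ ⊗ eᵢ` on `C^d ⊗ C^d`. -/
def maxEntVec (d : ℕ) : Fin d × Fin d → ℂ :=
  fun p => if p.1 = p.2 then ((1 / Real.sqrt d : ℝ) : ℂ) else 0

/-! ### Trace norm -/

/-- The trace norm of a square complex matrix: the sum of its singular values. -/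
def traceNorm {ι : Type*} [Fintype ι] [DecidableEq ι] (A : Matrix ι ι ℂ) : ℝ :=
  ∑ i, Real.sqrt ((Matrix.posSemidef_conjTranspose_mul_self A).isHermitian.eigenvalues i)

/-! ### Kronecker products of bipartite states, with the canonical local reindexing -/

/-- The canonical regrouping of indices identifying `(C^a⊗C^b)⊗(C^c⊗C^d)` with
`C^{ac}⊗C^{bd}`. -/
def pairEquiv (a b c d : ℕ) : ((Fin a × Fin b) × Fin c × Fin d) ≃ Fin (a * c) × Fin (b * d) :=
  (Equiv.prodProdProdComm (Fin a) (Fin b) (Fin c) (Fin d)).trans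
    (Equiv.prodCongr finProdFinEquiv finProdFinEquiv)

/-- Kronecker product of two bipartite states, regarded (after the canonical local reindexing)
as a state on `C^{ac}⊗C^{bd}`. -/
def stateKron {a b c d : ℕ} (ρ : Matrix (Fin a × Fin b) (Fin a × Fin b) ℂ)
    (σ : Matrix (Fin c × Fin d) (Fin c × Fin d) ℂ) :
    Matrix (Fin (a * c) × Fin (b * d)) (Fin (a * c) × Fin (b * d)) ℂ :=
  Matrix.reindex (pairEquiv a b c d) (pairEquiv a b c d) (ρ ⊗ₖ σ)

/-- The `n`-fold Kronecker power `ρ^{⊗n}` of a bipartite state, regarded (after the canonical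
local reindexing grouping the `n` A-factors and the `n` B-factors) as a state on
`C^{a^n}⊗C^{b^n}`. -/
def statePow {a b : ℕ} (ρ : Matrix (Fin a × Fin b) (Fin a × Fin b) ℂ) :
    (n : ℕ) → Matrix (Fin (a ^ n) × Fin (b ^ n)) (Fin (a ^ n) × Fin (b ^ n)) ℂ
  | 0 => 1
  | n + 1 =>
      Matrix.reindex
        (Equiv.prodCongr (finCongr (pow_succ a n).symm) (finCongr (pow_succ b n).symm))
        (Equiv.prodCongr (finCongr (pow_succ a n).symm) (finCongr (pow_succ b n).symm))
        (stateKron (statePow ρ n) ρ)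

/-! ### LQCC operations -/

/-- The data of an LQCC protocol from `C^a⊗C^b` to `C^{a'}⊗C^{b'}`: `n ≥ 1` rounds; intermediate
local dimensions; at step `2k` Alice applies operators `V k`, at step `2k+1` Bob applies
operators `W k`, each labelled by a classical outcome and allowed to depend on all outcomes
obtained so far, and each family summing (over its own outcome) to the identity. -/
structure LQCCProtocol (a b a' b' : ℕ) where
  n : ℕ
  npos : 0 < n
  adim : ℕ → ℕ
  bdim : ℕ → ℕ
  ha0 : adim 0 = a
  hb0 : bdim 0 = b
  han : adim n = a'
  hbn : bdim n = b'
  /-- the number of classical outcomes at each of the `2n` steps -/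
  K : Fin (2 * n) → ℕ
  V : ∀ k : ℕ, (∀ s : Fin (2 * n), Fin (K s)) →
      Matrix (Fin (adim (k + 1))) (Fin (adim k)) ℂ
  W : ∀ k : ℕ, (∀ s : Fin (2 * n), Fin (K s)) →
      Matrix (Fin (bdim (k + 1))) (Fin (bdim k)) ℂ
  /-- Alice's round-`k` operator depends only on the outcomes of steps `≤ 2k`. -/
  hVdep : ∀ (k : ℕ) (i i' : ∀ s : Fin (2 * n), Fin (K s)),
      (∀ s : Fin (2 * n), (s : ℕ) ≤ 2 * k → i s = i' s) → V k i = V k i'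
  /-- Bob's round-`k` operator depends only on the outcomes of steps `≤ 2k+1`. -/
  hWdep : ∀ (k : ℕ) (i i' : ∀ s : Fin (2 * n), Fin (K s)),
      (∀ s : Fin (2 * n), (s : ℕ) ≤ 2 * k + 1 → i s = i' s) → W k i = W k i'
  hVnorm : ∀ (k : ℕ) (hk : k < n) (i : ∀ s : Fin (2 * n), Fin (K s)),
      ∑ j : Fin (K ⟨2 * k, by omega⟩),
        (V k (Function.update i ⟨2 * k, by omega⟩ j))ᴴ *
          V k (Function.update i ⟨2 * k, by omega⟩ j) = 1
  hWnorm : ∀ (k : ℕ) (hk : k < n) (i : ∀ s : Fin (2 * n), Fin (K s)),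
      ∑ j : Fin (K ⟨2 * k + 1, by omega⟩),
        (W k (Function.update i ⟨2 * k + 1, by omega⟩ j))ᴴ *
          W k (Function.update i ⟨2 * k + 1, by omega⟩ j) = 1

namespace LQCCProtocol

variable {a b a' b' : ℕ} (P : LQCCProtocol a b a' b')

/-- The type of full classical outcome histories of a protocol. -/
abbrev Hist : Type := ∀ s : Fin (2 * P.n), Fin (P.K s)

/-- The product `(1⊗W_{k-1})(V_{k-1}⊗1)⋯(1⊗W₀)(V₀⊗1)` of the first `k` rounds of operators,
for a given outcome history. -/
def partialOp (i : P.Hist) :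
    (k : ℕ) → Matrix (Fin (P.adim k) × Fin (P.bdim k)) (Fin (P.adim 0) × Fin (P.bdim 0)) ℂ
  | 0 => 1
  | k + 1 =>
      (((1 : Matrix (Fin (P.adim (k + 1))) (Fin (P.adim (k + 1))) ℂ) ⊗ₖ P.W k i) *
        (P.V k i ⊗ₖ (1 : Matrix (Fin (P.bdim k)) (Fin (P.bdim k)) ℂ))) *
        partialOp i k

/-- The total Kraus operator `V_{i₁…i_{2n}}` of a protocol for a given outcome history. -/
def totalOp (i : P.Hist) : Matrix (Fin a' × Fin b') (Fin a × Fin b) ℂ :=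
  Matrix.reindex (Equiv.prodCongr (finCongr P.han) (finCongr P.hbn))
    (Equiv.prodCongr (finCongr P.ha0) (finCongr P.hb0)) (P.partialOp i P.n)

end LQCCProtocol

/-- A map on matrices is an LQCC operation if it is implemented by some LQCC protocol:
`Λ(σ) = ∑ᵢ Vᵢ σ Vᵢᴴ` over all outcome histories `i`. -/
def IsLQCC {a b a' b' : ℕ}
    (Λ : Matrix (Fin a × Fin b) (Fin a × Fin b) ℂ →
      Matrix (Fin a' × Fin b') (Fin a' × Fin b') ℂ) : Prop :=
  ∃ P : LQCCProtocol a b a' b',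
    ∀ σ, Λ σ = ∑ i : P.Hist, P.totalOp i * σ * (P.totalOp i)ᴴ

/-! ### Entanglement measures and the standard conditions -/

/-- A family assigning a real number to every bipartite density matrix, for all dimensions. -/
def EntFun : Type :=
  ∀ (a b : ℕ), Matrix (Fin a × Fin b) (Fin a × Fin b) ℂ → ℝ

/-- Nonnegativity on (mixed) states. -/
def MixedNonneg (E : EntFun) : Prop :=
  ∀ (a b : ℕ) (ρ : Matrix (Fin a × Fin b) (Fin a × Fin b) ℂ), IsState ρ → 0 ≤ E a b ρ

/-- Nonnegativity on pure states. -/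
def PureNonneg (E : EntFun) : Prop :=
  ∀ (a b : ℕ) (ψ : Fin a × Fin b → ℂ), UnitVec ψ → 0 ≤ E a b (projVec ψ)

/-- Invariance under conjugation by local unitaries, on states. -/
def MixedLocalUnitaryInv (E : EntFun) : Prop :=
  ∀ (a b : ℕ) (ρ : Matrix (Fin a × Fin b) (Fin a × Fin b) ℂ), IsState ρ →
    ∀ (U : Matrix (Fin a) (Fin a) ℂ) (V : Matrix (Fin b) (Fin b) ℂ),
      U ∈ Matrix.unitaryGroup (Fin a) ℂ → V ∈ Matrix.unitaryGroup (Fin b) ℂ →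
      E a b ((U ⊗ₖ V) * ρ * (U ⊗ₖ V)ᴴ) = E a b ρ

/-- Invariance under conjugation by local unitaries, on pure states. -/
def PureLocalUnitaryInv (E : EntFun) : Prop :=
  ∀ (a b : ℕ) (ρ : Matrix (Fin a × Fin b) (Fin a × Fin b) ℂ), IsPureState ρ →
    ∀ (U : Matrix (Fin a) (Fin a) ℂ) (V : Matrix (Fin b) (Fin b) ℂ),
      U ∈ Matrix.unitaryGroup (Fin a) ℂ → V ∈ Matrix.unitaryGroup (Fin b) ℂ →
      E a b ((U ⊗ₖ V) * ρ * (U ⊗ₖ V)ᴴ) = E a b ρ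

/-- (E0): separable states have zero entanglement. -/
def CondE0 (E : EntFun) : Prop :=
  ∀ (a b : ℕ) (ρ : Matrix (Fin a × Fin b) (Fin a × Fin b) ℂ), IsState ρ → IsSepState ρ →
    E a b ρ = 0

/-- (E1)=(P1): normalization on representatives of the maximally entangled states. -/
def CondE1 (E : EntFun) : Prop :=
  ∀ (a b d : ℕ), 1 ≤ d → ∀ P : Matrix (Fin a × Fin b) (Fin a × Fin b) ℂ,
    IsMaxEntRep d P → E a b P = Real.logb 2 d

/-- (E2): monotonicity under LQCC operations. -/
def CondE2 (E : EntFun) : Prop :=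
  ∀ (a b a' b' : ℕ)
    (Λ : Matrix (Fin a × Fin b) (Fin a × Fin b) ℂ →
      Matrix (Fin a' × Fin b') (Fin a' × Fin b') ℂ)
    (σ : Matrix (Fin a × Fin b) (Fin a × Fin b) ℂ),
    IsState σ → IsLQCC Λ → E a' b' (Λ σ) ≤ E a b σ

/-- (E3): asymptotic continuity. -/
def CondE3 (E : EntFun) : Prop :=
  ∀ (A B : ℕ → ℕ) (ρ σ : ∀ n : ℕ, Matrix (Fin (A n) × Fin (B n)) (Fin (A n) × Fin (B n)) ℂ),
    (∀ n, IsState (ρ n)) → (∀ n, IsState (σ n)) →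
    Tendsto (fun n => traceNorm (ρ n - σ n)) atTop (nhds 0) →
    Tendsto (fun n =>
      (E (A n) (B n) (ρ n) - E (A n) (B n) (σ n)) / (1 + Real.logb 2 ((A n : ℝ) * (B n : ℝ))))
      atTop (nhds 0)

/-- (E3'): asymptotic continuity, where the first sequence consists of pure states. -/
def CondE3' (E : EntFun) : Prop :=
  ∀ (A B : ℕ → ℕ) (ρ σ : ∀ n : ℕ, Matrix (Fin (A n) × Fin (B n)) (Fin (A n) × Fin (B n)) ℂ),
    (∀ n, IsPureState (ρ n)) → (∀ n, IsState (σ n)) →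
    Tendsto (fun n => traceNorm (ρ n - σ n)) atTop (nhds 0) →
    Tendsto (fun n =>
      (E (A n) (B n) (ρ n) - E (A n) (B n) (σ n)) / (1 + Real.logb 2 ((A n : ℝ) * (B n : ℝ))))
      atTop (nhds 0)

/-- (E4): additivity. -/
def CondE4 (E : EntFun) : Prop :=
  ∀ (a b : ℕ) (ρ : Matrix (Fin a × Fin b) (Fin a × Fin b) ℂ), IsState ρ →
    ∀ n : ℕ, 1 ≤ n → E (a ^ n) (b ^ n) (statePow ρ n) = n * E a b ρ

/-- (E4'): asymptotic additivity. -/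
def CondE4' (E : EntFun) : Prop :=
  ∀ (a b : ℕ) (ρ : Matrix (Fin a × Fin b) (Fin a × Fin b) ℂ), IsState ρ →
    ∀ ε : ℝ, 0 < ε → ∃ N : ℕ, 0 < N ∧ ∀ n : ℕ, N ≤ n →
      E (a ^ n) (b ^ n) (statePow ρ n) / n - ε ≤ E a b ρ ∧
      E a b ρ ≤ E (a ^ n) (b ^ n) (statePow ρ n) / n + ε

/-- (E5): subadditivity. -/
def CondE5 (E : EntFun) : Prop :=
  ∀ (a b c d : ℕ) (ρ : Matrix (Fin a × Fin b) (Fin a × Fin b) ℂ)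
    (σ : Matrix (Fin c × Fin d) (Fin c × Fin d) ℂ), IsState ρ → IsState σ →
    E (a * c) (b * d) (stateKron ρ σ) ≤ E a b ρ + E c d σ

/-- (E5''): existence of the regularization. -/
def CondE5'' (E : EntFun) : Prop :=
  ∀ (a b : ℕ) (ρ : Matrix (Fin a × Fin b) (Fin a × Fin b) ℂ), IsState ρ →
    ∃ L : ℝ, Tendsto (fun n : ℕ => E (a ^ n) (b ^ n) (statePow ρ n) / n) atTop (nhds L)

/-- (E6): convexity. -/
def CondE6 (E : EntFun) : Prop :=
  ∀ (a b : ℕ) (ρ σ : Matrix (Fin a × Fin b) (Fin a × Fin b) ℂ), IsState ρ → IsState σ →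
    ∀ l : ℝ, 0 ≤ l → l ≤ 1 →
      E a b (l • ρ + (1 - l) • σ) ≤ l * E a b ρ + (1 - l) * E a b σ

/-- (E6'): convexity on finite decompositions into pure states. -/
def CondE6' (E : EntFun) : Prop :=
  ∀ (a b k : ℕ) (p : Fin k → ℝ) (ψ : Fin k → Fin a × Fin b → ℂ),
    (∀ i, 0 ≤ p i) → (∑ i, p i = 1) → (∀ i, UnitVec (ψ i)) →
    E a b (∑ i, p i • projVec (ψ i)) ≤ ∑ i, p i * E a b (projVec (ψ i))

/-- (P0): separable pure states have zero entanglement. -/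
def CondP0 (E : EntFun) : Prop :=
  ∀ (a b : ℕ) (ψA : Fin a → ℂ) (ψB : Fin b → ℂ), UnitVec (tensorVec ψA ψB) →
    E a b (projVec (tensorVec ψA ψB)) = 0

/-- (P1): normalization (same as (E1)). -/
def CondP1 (E : EntFun) : Prop := CondE1 E

/-- (P1'): `E(P₊(C²)) = 1`. -/
def CondP1' (E : EntFun) : Prop := E 2 2 (projVec (maxEntVec 2)) = 1

/-- (P2): monotonicity under LQCC operations mapping pure states to pure states. -/
def CondP2 (E : EntFun) : Prop :=
  ∀ (a b a' b' : ℕ)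
    (Λ : Matrix (Fin a × Fin b) (Fin a × Fin b) ℂ →
      Matrix (Fin a' × Fin b') (Fin a' × Fin b') ℂ)
    (σ : Matrix (Fin a × Fin b) (Fin a × Fin b) ℂ),
    IsPureState σ → IsLQCC Λ → IsPureState (Λ σ) → E a' b' (Λ σ) ≤ E a b σ

/-- (P3): asymptotic continuity on pure states. -/
def CondP3 (E : EntFun) : Prop :=
  ∀ (A B : ℕ → ℕ) (ρ σ : ∀ n : ℕ, Matrix (Fin (A n) × Fin (B n)) (Fin (A n) × Fin (B n)) ℂ),
    (∀ n, IsPureState (ρ n)) → (∀ n, IsPureState (σ n)) →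
    Tendsto (fun n => traceNorm (ρ n - σ n)) atTop (nhds 0) →
    Tendsto (fun n =>
      (E (A n) (B n) (ρ n) - E (A n) (B n) (σ n)) / (1 + Real.logb 2 ((A n : ℝ) * (B n : ℝ))))
      atTop (nhds 0)

/-- (P4): additivity on pure states. -/
def CondP4 (E : EntFun) : Prop :=
  ∀ (a b : ℕ) (ψ : Fin a × Fin b → ℂ), UnitVec ψ →
    ∀ n : ℕ, 1 ≤ n →
      E (a ^ n) (b ^ n) (statePow (projVec ψ) n) = n * E a b (projVec ψ)

/-- (P4'): asymptotic additivity on pure states. -/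
def CondP4' (E : EntFun) : Prop :=
  ∀ (a b : ℕ) (ψ : Fin a × Fin b → ℂ), UnitVec ψ →
    ∀ ε : ℝ, 0 < ε → ∃ N : ℕ, 0 < N ∧ ∀ n : ℕ, N ≤ n →
      E (a ^ n) (b ^ n) (statePow (projVec ψ) n) / n - ε ≤ E a b (projVec ψ) ∧
      E a b (projVec ψ) ≤ E (a ^ n) (b ^ n) (statePow (projVec ψ) n) / n + ε

/-! ### Entanglement of distillation and entanglement cost -/

/-- The distillable entanglement `E_D`. -/
def ED {a b : ℕ} (ρ : Matrix (Fin a × Fin b) (Fin a × Fin b) ℂ) : ℝ :=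
  sSup {r : ℝ |
    ∃ (d : ℕ → ℕ)
      (Λ : ∀ n : ℕ, Matrix (Fin (a ^ n) × Fin (b ^ n)) (Fin (a ^ n) × Fin (b ^ n)) ℂ →
        Matrix (Fin (a ^ n) × Fin (b ^ n)) (Fin (a ^ n) × Fin (b ^ n)) ℂ)
      (P : ∀ n : ℕ, Matrix (Fin (a ^ n) × Fin (b ^ n)) (Fin (a ^ n) × Fin (b ^ n)) ℂ),
      (∀ n, 0 < d n) ∧ (∀ n, IsLQCC (Λ n)) ∧ (∀ n, IsMaxEntRep (d n) (P n)) ∧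
      Tendsto (fun n => traceNorm (P n - Λ n (statePow ρ n))) atTop (nhds 0) ∧
      r = Filter.limsup (fun n : ℕ => Real.logb 2 (d n) / n) atTop}

/-- The entanglement cost `E_C`. -/
def EC {a b : ℕ} (ρ : Matrix (Fin a × Fin b) (Fin a × Fin b) ℂ) : ℝ :=
  sInf {r : ℝ |
    ∃ (d : ℕ → ℕ)
      (Λ : ∀ n : ℕ, Matrix (Fin (d n) × Fin (d n)) (Fin (d n) × Fin (d n)) ℂ →
        Matrix (Fin (a ^ n) × Fin (b ^ n)) (Fin (a ^ n) × Fin (b ^ n)) ℂ)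
      (P : ∀ n : ℕ, Matrix (Fin (d n) × Fin (d n)) (Fin (d n) × Fin (d n)) ℂ),
      (∀ n, 0 < d n) ∧ (∀ n, IsLQCC (Λ n)) ∧ (∀ n, IsMaxEntRep (d n) (P n)) ∧
      Tendsto (fun n => traceNorm (Λ n (P n) - statePow ρ n)) atTop (nhds 0) ∧
      r = Filter.liminf (fun n : ℕ => Real.logb 2 (d n) / n) atTop}


/-! ### Majorization and composition of families of maps -/

/-- For vectors arranged in decreasing order, `MajorizesDesc q p` says that `q` majorizes `p`:
for every `k`, the sum of the `k` largest entries of `q` is at least that of `p`. -/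
def MajorizesDesc {M : ℕ} (q p : Fin M → ℝ) : Prop :=
  ∀ k : ℕ, k ≤ M →
    ∑ i ∈ Finset.univ.filter (fun i : Fin M => (i : ℕ) < k), p i ≤
      ∑ i ∈ Finset.univ.filter (fun i : Fin M => (i : ℕ) < k), q i

/-- `composeFam N f = f 0 ∘ f 1 ∘ ⋯ ∘ f (N-1)` (the identity for `N = 0`). -/
def composeFam {α : Type*} : (N : ℕ) → (Fin N → α → α) → α → α
  | 0, _ => id
  | N + 1, f => f 0 ∘ composeFam N (fun i => f i.succ)

end

/-!
Regard `ψ` as the `a × b` matrix `M` with `M i j = ψ (i, j)`. If `(u_k)` is an orthonormal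
eigenbasis of `M Mᴴ`, the rows `u_kᴴ M` are pairwise orthogonal, since
`⟪u_kᴴ M, u_lᴴ M⟫ = u_lᴴ (M Mᴴ) u_k`. Writing them as `s_k v_k` with `s_k = ‖u_kᴴ M‖` and `(v_k)`
orthonormal (completed arbitrarily where `u_kᴴ M = 0`, which is possible when `a ≤ b`) gives
`M = ∑ s_k u_k v_kᵀ`; when `a > b`, apply this to `Mᵀ`. The weights `p_k = s_k²` sum to
`‖ψ‖² = 1` because the vectors `u_k ⊗ v_k` are orthonormal.
-/

section SingularValueDecomposition

open Module

theorem exists_orthonormal_smul_norm_eq {𝕜 E ι : Type*} [RCLike 𝕜] [NormedAddCommGroup E]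
    [InnerProductSpace 𝕜 E] [FiniteDimensional 𝕜 E] [Fintype ι]
    (hcard : Fintype.card ι ≤ finrank 𝕜 E) {x : ι → E}
    (hx : Pairwise fun k l => inner 𝕜 (x k) (x l) = 0) :
    ∃ v : ι → E, Orthonormal 𝕜 v ∧ ∀ k, x k = (‖x k‖ : 𝕜) • v k := by
  -- pad `ι` to `finrank 𝕜 E` indices so that the equal-cardinality extension theorem applies
  let w : ι ⊕ Fin (finrank 𝕜 E - Fintype.card ι) → E :=
    Sum.elim (fun k => (‖x k‖⁻¹ : 𝕜) • x k) 0
  let s : Set (ι ⊕ Fin (finrank 𝕜 E - Fintype.card ι)) := Sum.inl '' {k | x k ≠ 0}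
  have hw : Orthonormal 𝕜 (s.domRestrict w) := by
    refine ⟨?_, ?_⟩
    · rintro ⟨_, k, hk, rfl⟩
      exact norm_smul_inv_norm hk
    · rintro ⟨_, k, _, rfl⟩ ⟨_, l, _, rfl⟩ hne
      have hkl : k ≠ l := by rintro rfl; exact hne rfl
      simp [w, inner_smul_left, inner_smul_right, hx hkl]
  obtain ⟨b, hb⟩ := hw.exists_orthonormalBasis_extension_of_card_eq (by simp; omega)
  refine ⟨fun k => b (Sum.inl k), b.orthonormal.comp _ Sum.inl_injective, fun k => ?_⟩
  by_cases hk : x k = 0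
  · simp [hk]
  · simp [hb _ ⟨k, hk, rfl⟩, w, smul_smul, hk]

variable {𝕜 m n κ : Type*} [RCLike 𝕜] [Fintype m] [Fintype n] [Fintype κ]

theorem Matrix.inner_toLp_star_vecMul (M : Matrix m n 𝕜) (x y : m → 𝕜) :
    inner 𝕜 (WithLp.toLp 2 (star x ᵥ* M)) (WithLp.toLp 2 (star y ᵥ* M)) =
      star y ⬝ᵥ ((M * Mᴴ) *ᵥ x) := by
  rw [EuclideanSpace.inner_toLp_toLp, star_vecMul, star_star, ← mulVec_mulVec,
    dotProduct_mulVec (star y) M]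

omit [Fintype n] in
theorem OrthonormalBasis.sum_vecMulVec_star_vecMul (b : OrthonormalBasis κ 𝕜 (EuclideanSpace 𝕜 m))
    (M : Matrix m n 𝕜) : ∑ k, vecMulVec (b k) (star ⇑(b k) ᵥ* M) = M := by
  ext i j
  have hcol := congr(($(b.sum_repr' (WithLp.toLp 2 fun i => M i j))) i)
  simp only [EuclideanSpace.inner_eq_star_dotProduct, WithLp.ofLp_sum, WithLp.ofLp_smul,
    dotProduct, Pi.star_apply, RCLike.star_def, Finset.sum_apply, Pi.smul_apply,
    smul_eq_mul] at hcol
  simp only [← hcol, Matrix.sum_apply, vecMulVec_apply, vecMul, dotProduct, Pi.star_apply,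
    RCLike.star_def, mul_comm]

theorem Matrix.exists_sum_smul_vecMulVec_of_card_eq (hκ : Fintype.card κ = Fintype.card m)
    (hmn : Fintype.card m ≤ Fintype.card n) (M : Matrix m n 𝕜) :
    ∃ (s : κ → ℝ) (u : κ → EuclideanSpace 𝕜 m) (v : κ → EuclideanSpace 𝕜 n),
      (∀ k, 0 ≤ s k) ∧ Orthonormal 𝕜 u ∧ Orthonormal 𝕜 v ∧
      M = ∑ k, (s k : 𝕜) • vecMulVec (u k) (v k) := by
  have hH := isHermitian_mul_conjTranspose_self M
  let b := hH.eigenvectorBasis.reindex (Fintype.equivOfCardEq hκ).symm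
  let c k := WithLp.toLp 2 (star ⇑(b k) ᵥ* M)
  have hc : Pairwise fun k l => inner 𝕜 (c k) (c l) = 0 := by
    intro k l hkl
    have hbb := b.orthonormal.inner_eq_zero hkl.symm
    simp only [b, OrthonormalBasis.reindex_apply] at hbb
    simp only [c, inner_toLp_star_vecMul, b, OrthonormalBasis.reindex_apply,
      hH.mulVec_eigenvectorBasis]
    rw [dotProduct_smul, dotProduct_comm, ← EuclideanSpace.inner_eq_star_dotProduct, hbb,
      smul_zero]
  obtain ⟨v, hv, hcv⟩ := exists_orthonormal_smul_norm_eq (by simpa [hκ]) hc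
  refine ⟨fun k => ‖c k‖, b, v, fun k => norm_nonneg _, b.orthonormal, hv, ?_⟩
  conv_lhs => rw [← b.sum_vecMulVec_star_vecMul M]
  refine Finset.sum_congr rfl fun k _ => ?_
  have hk : star ⇑(b k) ᵥ* M = (‖c k‖ : 𝕜) • ⇑(v k) := congrArg WithLp.ofLp (hcv k)
  rw [hk, vecMulVec_smul]

theorem Matrix.exists_sum_smul_vecMulVec_of_card_eq_min
    (hκ : Fintype.card κ = min (Fintype.card m) (Fintype.card n)) (M : Matrix m n 𝕜) :
    ∃ (s : κ → ℝ) (u : κ → EuclideanSpace 𝕜 m) (v : κ → EuclideanSpace 𝕜 n),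
      (∀ k, 0 ≤ s k) ∧ Orthonormal 𝕜 u ∧ Orthonormal 𝕜 v ∧
      M = ∑ k, (s k : 𝕜) • vecMulVec (u k) (v k) := by
  rcases le_total (Fintype.card m) (Fintype.card n) with hmn | hnm
  · exact M.exists_sum_smul_vecMulVec_of_card_eq (by omega) hmn
  · obtain ⟨s, u, v, hs, hu, hv, hM⟩ :=
      Mᵀ.exists_sum_smul_vecMulVec_of_card_eq (κ := κ) (by omega) hnm
    refine ⟨s, v, u, hs, hv, hu, ?_⟩
    rw [← transpose_transpose M, hM]
    simp [transpose_sum, transpose_vecMulVec]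

end SingularValueDecomposition

theorem cdot_eq_inner {ι : Type*} [Fintype ι] (u v : ι → ℂ) :
    cdot u v = inner ℂ (WithLp.toLp 2 u) (WithLp.toLp 2 v) := by
  simp [cdot, EuclideanSpace.inner_toLp_toLp, dotProduct, mul_comm]

theorem orthonormalFam_iff_orthonormal {κ ι : Type*} [Fintype ι] {χ : κ → ι → ℂ} :
    OrthonormalFam χ ↔ Orthonormal ℂ fun k => WithLp.toLp 2 (χ k) := by
  simp [OrthonormalFam, orthonormal_iff_ite, cdot_eq_inner]

theorem cdot_tensorVec {a b : ℕ} (u u' : Fin a → ℂ) (v v' : Fin b → ℂ) :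
    cdot (tensorVec u v) (tensorVec u' v') = cdot u u' * cdot v v' := by
  simp only [cdot, tensorVec, Fintype.sum_prod_type, Finset.sum_mul_sum, star_mul']
  exact Finset.sum_congr rfl fun _ _ => Finset.sum_congr rfl fun _ _ => by ring

theorem OrthonormalFam.tensorVec {κ : Type*} {a b : ℕ} {A : κ → Fin a → ℂ} {B : κ → Fin b → ℂ}
    (hA : OrthonormalFam A) (hB : OrthonormalFam B) :
    OrthonormalFam fun k => tensorVec (A k) (B k) := by
  intro k l
  rw [cdot_tensorVec, hA, hB]
  split_ifs <;> simp

theorem OrthonormalFam.cdot_sum_smul_self {κ ι : Type*} [Fintype κ] [Fintype ι] {e : κ → ι → ℂ}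
    (he : OrthonormalFam e) (c : κ → ℂ) :
    cdot (∑ k, c k • e k) (∑ k, c k • e k) = ∑ k, star (c k) * c k := by
  simp only [cdot_eq_inner, WithLp.toLp_sum, WithLp.toLp_smul, sum_inner, inner_smul_left,
    (orthonormalFam_iff_orthonormal.1 he).inner_right_fintype, Complex.star_def]

theorem schmidt_decomposition_general (a b : ℕ) (m : ℕ) (hm : m = min a b)
    (ψ : Fin a × Fin b → ℂ) (hψ : UnitVec ψ) :
    ∃ (p : Fin m → ℝ) (A : Fin m → Fin a → ℂ) (B : Fin m → Fin b → ℂ),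
      (∀ i, 0 ≤ p i) ∧ (∑ i, p i = 1) ∧ OrthonormalFam A ∧ OrthonormalFam B ∧
      ψ = ∑ i, (Real.sqrt (p i) : ℂ) • tensorVec (A i) (B i) := by
  obtain ⟨s, u, v, hs, hu, hv, hψs⟩ :=
    (Matrix.of fun i j => ψ (i, j)).exists_sum_smul_vecMulVec_of_card_eq_min (κ := Fin m)
      (by simp [hm])
  have hA : OrthonormalFam fun k => ⇑(u k) := orthonormalFam_iff_orthonormal.2 (by simpa using hu)
  have hB : OrthonormalFam fun k => ⇑(v k) := orthonormalFam_iff_orthonormal.2 (by simpa using hv)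
  have hdecomp : ψ = ∑ k, (Real.sqrt (s k ^ 2) : ℂ) • tensorVec (u k) (v k) := by
    funext ⟨i, j⟩
    simpa [Real.sqrt_sq (hs _), tensorVec, Matrix.sum_apply, vecMulVec_apply, Finset.sum_apply,
      mul_assoc] using congr($hψs i j)
  refine ⟨fun k => s k ^ 2, fun k => u k, fun k => v k, fun k => sq_nonneg _, ?_, hA, hB, hdecomp⟩
  have hnorm := (hA.tensorVec hB).cdot_sum_smul_self fun k => (Real.sqrt (s k ^ 2) : ℂ)
  rw [← hdecomp, hψ] at hnorm
  simp only [Real.sqrt_sq (hs _), Complex.star_def, Complex.conj_ofReal] at hnorm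
  exact_mod_cast (show ((∑ k, s k ^ 2 : ℝ) : ℂ) = 1 by push_cast; simpa [sq] using hnorm.symm)

/-- **Schmidt decomposition.** Every unit vector in `C^a ⊗ C^b` is a combination
`∑ᵢ √pᵢ · (aᵢ ⊗ bᵢ)` of tensor products of orthonormal families, with `pᵢ ≥ 0` summing to 1. -/
theorem schmidt_decomposition (a b : ℕ) (ha : 0 < a) (hb : 0 < b) (m : ℕ) (hm : m = min a b)
    (ψ : Fin a × Fin b → ℂ) (hψ : UnitVec ψ) :
    ∃ (p : Fin m → ℝ) (A : Fin m → Fin a → ℂ) (B : Fin m → Fin b → ℂ),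
      (∀ i, 0 ≤ p i) ∧ (∑ i, p i = 1) ∧ OrthonormalFam A ∧ OrthonormalFam B ∧
      ψ = ∑ i, (Real.sqrt (p i) : ℂ) • tensorVec (A i) (B i) :=
  schmidt_decomposition_general a b m hm ψ hψ
end

section
/- Let Λ : Matrix (Fin n) (Fin n) ℂ → Matrix (Fin m) (Fin m) ℂ be a linear map that is positive (it maps positive semidefinite matrices to positive semidefinite matrices) and trace preserving (trace(Λ(B)) = trace(B) for all B). Then for every Hermitian matrix B, ‖Λ(B)‖₁ ≤ ‖B‖₁. -/
open scoped BigOperators Classical ComplexOrder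
open Matrix Kronecker Filter

/-! Writing a Hermitian `B` as `B⁺ - B⁻` with `B⁺ = max(B, 0)` and `B⁻ = max(-B, 0)` from
the functional calculus gives `‖B‖₁ = tr B⁺ + tr B⁻`. The map `Λ` sends `B⁺` and `B⁻` to
positive matrices with the same traces, and `‖P - Q‖₁ ≤ tr P + tr Q` for all positive `P, Q`:
in an eigenbasis of `P - Q`, each eigenvalue is the difference of two nonnegative diagonal
entries of `P` and `Q`. -/

namespace Matrix.IsHermitian

variable {n 𝕜 : Type*} [Fintype n] [DecidableEq n] [RCLike 𝕜] {A : Matrix n n 𝕜}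

lemma trace_cfc (hA : A.IsHermitian) (f : ℝ → ℝ) :
    (cfc f A).trace = ∑ i, (f (hA.eigenvalues i) : 𝕜) := by
  rw [hA.cfc_eq, IsHermitian.cfc, Unitary.conjStarAlgAut_apply, trace_mul_cycle,
    Unitary.coe_star_mul_self, one_mul, trace_diagonal]
  rfl

lemma posSemidef_cfc (hA : A.IsHermitian) {f : ℝ → ℝ} (hf : ∀ x, 0 ≤ f x) :
    (cfc f A).PosSemidef := by
  rw [hA.cfc_eq, IsHermitian.cfc, Unitary.conjStarAlgAut_apply, star_eq_conjTranspose]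
  exact (posSemidef_diagonal_iff.mpr fun i => by simpa using hf _).mul_mul_conjTranspose_same _

end Matrix.IsHermitian

section TraceNorm

variable {ι : Type*} [Fintype ι] [DecidableEq ι]

lemma ofReal_traceNorm (A : Matrix ι ι ℂ) :
    (traceNorm A : ℂ) = (cfc Real.sqrt (Aᴴ * A)).trace := by
  rw [(isHermitian_conjTranspose_mul_self A).trace_cfc, traceNorm, Complex.ofReal_sum]
  rfl

lemma Matrix.IsHermitian.traceNorm_eq_sum_abs_eigenvalues {A : Matrix ι ι ℂ}
    (hA : A.IsHermitian) : traceNorm A = ∑ i, |hA.eigenvalues i| := by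
  have hsq : Aᴴ * A = cfc (· ^ 2 : ℝ → ℝ) A := by
    rw [cfc_pow_id A 2 hA.isSelfAdjoint, hA.eq, sq]
  have habs : cfc Real.sqrt (Aᴴ * A) = cfc (fun x : ℝ => |x|) A := by
    rw [hsq, ← cfc_comp Real.sqrt (· ^ 2) A hA.isSelfAdjoint]
    simp only [Function.comp_def, Real.sqrt_sq_eq_abs]
  refine Complex.ofReal_injective ?_
  rw [ofReal_traceNorm, habs, hA.trace_cfc, Complex.ofReal_sum]
  rfl

lemma Matrix.IsHermitian.exists_posSemidef_sub_traceNorm {B : Matrix ι ι ℂ}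
    (hB : B.IsHermitian) :
    ∃ P Q : Matrix ι ι ℂ, P.PosSemidef ∧ Q.PosSemidef ∧ B = P - Q ∧
      P.trace.re + Q.trace.re = traceNorm B := by
  refine ⟨cfc (fun x => max x 0) B, cfc (fun x => max (-x) 0) B,
    hB.posSemidef_cfc fun _ => le_max_right _ _, hB.posSemidef_cfc fun _ => le_max_right _ _,
    ?_, ?_⟩
  · rw [← cfc_sub ..]
    conv_lhs => rw [← cfc_id' ℝ B]
    exact cfc_congr fun x _ => (max_zero_sub_max_neg_zero_eq_self x).symm
  · simp only [hB.trace_cfc, hB.traceNorm_eq_sum_abs_eigenvalues, Complex.re_sum,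
      ← Finset.sum_add_distrib, Complex.coe_algebraMap, Complex.ofReal_re,
      max_zero_add_max_neg_zero_eq_abs_self]

lemma traceNorm_sub_le {P Q : Matrix ι ι ℂ} (hP : P.PosSemidef) (hQ : Q.PosSemidef) :
    traceNorm (P - Q) ≤ P.trace.re + Q.trace.re := by
  have hC := hP.1.sub hQ.1
  rw [hC.traceNorm_eq_sum_abs_eigenvalues]
  set U : Matrix ι ι ℂ := ↑hC.eigenvectorUnitary
  set d : Matrix ι ι ℂ → ι → ℝ := fun M i => ((star U * M * U) i i).re
  have hdiag : star U * (P - Q) * U = diagonal (RCLike.ofReal ∘ hC.eigenvalues) := by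
    simpa [Unitary.conjStarAlgAut_star_apply] using hC.conjStarAlgAut_star_eigenvectorUnitary
  have hd_nonneg {M : Matrix ι ι ℂ} (hM : M.PosSemidef) (i : ι) : 0 ≤ d M i :=
    (Complex.nonneg_iff.mp (hM.conjTranspose_mul_mul_same U).diag_nonneg).1
  have heig (i : ι) : hC.eigenvalues i = d P i - d Q i := by
    have h := congrArg (fun M => (M i i).re) hdiag
    simp only [Matrix.mul_sub, Matrix.sub_mul, Matrix.sub_apply, Complex.sub_re,
      diagonal_apply_eq, Complex.coe_algebraMap, Function.comp_apply, Complex.ofReal_re] at h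
    exact h.symm
  have hsum_d (M : Matrix ι ι ℂ) : ∑ i, d M i = M.trace.re := by
    calc ∑ i, d M i = (star U * M * U).trace.re := (Complex.re_sum _ _).symm
      _ = M.trace.re := by
        rw [trace_mul_cycle, Unitary.mul_star_self_of_mem hC.eigenvectorUnitary.2, one_mul]
  calc ∑ i, |hC.eigenvalues i|
      ≤ ∑ i, (d P i + d Q i) := Finset.sum_le_sum fun i _ => by
        rw [heig i, abs_le]
        constructor <;> linarith [hd_nonneg hP i, hd_nonneg hQ i]
    _ = P.trace.re + Q.trace.re := by rw [Finset.sum_add_distrib, hsum_d, hsum_d]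

end TraceNorm

/-- A positive trace-preserving linear map does not increase the trace norm of Hermitian
matrices. -/
theorem traceNorm_le_of_positive_tracePreserving {n m : ℕ}
    (Λ : Matrix (Fin n) (Fin n) ℂ →ₗ[ℂ] Matrix (Fin m) (Fin m) ℂ)
    (hpos : ∀ B : Matrix (Fin n) (Fin n) ℂ, B.PosSemidef → (Λ B).PosSemidef)
    (htr : ∀ B : Matrix (Fin n) (Fin n) ℂ, (Λ B).trace = B.trace)
    (B : Matrix (Fin n) (Fin n) ℂ) (hB : B.IsHermitian) :
    traceNorm (Λ B) ≤ traceNorm B := by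
  obtain ⟨P, Q, hP, hQ, rfl, hPQ⟩ := hB.exists_posSemidef_sub_traceNorm
  calc traceNorm (Λ (P - Q)) = traceNorm (Λ P - Λ Q) := by rw [map_sub]
    _ ≤ (Λ P).trace.re + (Λ Q).trace.re := traceNorm_sub_le (hpos P hP) (hpos Q hQ)
    _ = traceNorm (P - Q) := by rw [htr, htr, hPQ]
end

section
/- Let M ≥ 1, let (χ_m)_{m=1}^M and (κ_m)_{m=1}^M be orthonormal bases of C^M, and let p, q : Fin M → ℝ be nonincreasing sequences of nonnegative reals each summing to 1 such that q majorizes p. Set Ψ = ∑_{m=1}^M √(p_m) · (χ_m ⊗ κ_m) and Φ = ∑_{m=1}^M √(q_m) · (χ_m ⊗ κ_m). Then there exist an integer N < M and completely positive maps Λ_1, …, Λ_N on matrices over Fin M × Fin M, each of the form Λ(ω) = (C⊗U) ω (C⊗U)† + (D⊗V) ω (D⊗V)† with U, V ∈ M_M(ℂ) unitary and C, D ∈ M_M(ℂ) satisfying C†C + D†D = 1, such that (Λ_1 ∘ Λ_2 ∘ ⋯ ∘ Λ_N)(|Ψ⟩⟨Ψ|) = |Φ⟩⟨Φ| (for N =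 0 the composition is the identity). -/
open scoped BigOperators Classical ComplexOrder
open Matrix Kronecker Filter

/-!
Read backwards, Nielsen's protocol is a sequence of T-transforms. Since `q ≻ p` and both are
sorted, a Robin Hood transfer of mass from a coordinate `j` with `p j < q j` to the first later
coordinate `k` with `q k < p k` gives a sorted `q'` with `q ≻ q' ≻ p` that agrees with `p` in one
more coordinate (Marshall–Olkin, 2.B.1). Two vectors with equal sums never differ in exactly one
coordinate, so at most `M - 1` transfers lead from `q` back to `p`.

Each transfer has the form `q' = t q + (1 - t) (q ∘ σ)` with `σ` a transposition, and it is undone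
on Schmidt states by one local operation with two outcomes: Alice applies
`C = ∑ x_m |χ_m⟩⟨χ_m|` or `D = ∑ y_m |χ_{σ m}⟩⟨χ_m|`, where `x_m² q'_m = t q_m` and
`y_m² q'_m = (1 - t) q_{σ m}`, and Bob answers the second outcome with the unitary
`κ_m ↦ κ_{σ m}`. Both branches leave the state `Ψ_q`, with probabilities `t` and `1 - t`.
-/

noncomputable section

section Transfers

variable {ι : Type*}

def tTransform (t : ℝ) (σ : Equiv.Perm ι) (r : ι → ℝ) : ι → ℝ :=
  fun m => t * r m + (1 - t) * r (σ m)

lemma tTransform_nonneg {r : ι → ℝ} (hr : ∀ m, 0 ≤ r m) (σ : Equiv.Perm ι) {t : ℝ}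
    (ht0 : 0 ≤ t) (ht1 : t ≤ 1) (m : ι) : 0 ≤ tTransform t σ r m :=
  add_nonneg (mul_nonneg ht0 (hr m)) (mul_nonneg (sub_nonneg.mpr ht1) (hr (σ m)))

lemma sum_tTransform [Fintype ι] (t : ℝ) (σ : Equiv.Perm ι) (r : ι → ℝ) :
    ∑ m, tTransform t σ r m = ∑ m, r m := by
  simp only [tTransform, Finset.sum_add_distrib, ← Finset.mul_sum, Equiv.sum_comp σ r]
  ring

variable [DecidableEq ι]

def massTransfer (q : ι → ℝ) (j k : ι) (δ : ℝ) : ι → ℝ := q - Pi.single j δ + Pi.single k δ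

variable {q : ι → ℝ} {j k : ι} {δ : ℝ}

lemma massTransfer_apply_left (hjk : j ≠ k) : massTransfer q j k δ j = q j - δ := by
  simp [massTransfer, hjk]

lemma massTransfer_apply_right (hjk : j ≠ k) : massTransfer q j k δ k = q k + δ := by
  simp [massTransfer, hjk.symm]

lemma massTransfer_apply_of_ne {m : ι} (hj : m ≠ j) (hk : m ≠ k) :
    massTransfer q j k δ m = q m := by
  simp [massTransfer, hj, hk]

lemma exists_massTransfer_eq_tTransform (hjk : j ≠ k) (hδ : 0 ≤ δ) (hδq : δ ≤ q j - q k) :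
    ∃ t, 0 ≤ t ∧ t ≤ 1 ∧ massTransfer q j k δ = tTransform t (Equiv.swap j k) q := by
  rcases (hδ.trans hδq).eq_or_lt with hgap | hgap
  · obtain rfl : δ = 0 := by linarith
    refine ⟨1, zero_le_one, le_rfl, ?_⟩
    ext m
    simp [massTransfer, tTransform]
  have hratio : δ / (q j - q k) ≤ 1 := (div_le_one hgap).mpr hδq
  have hmix : (1 - (1 - δ / (q j - q k))) * (q j - q k) = δ := by
    rw [sub_sub_cancel, div_mul_cancel₀ _ hgap.ne']
  refine ⟨1 - δ / (q j - q k), by linarith, by linarith [div_nonneg hδ hgap.le], ?_⟩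
  ext m
  by_cases hmj : m = j
  · subst hmj
    simp only [massTransfer_apply_left hjk, tTransform, Equiv.swap_apply_left]
    linarith
  by_cases hmk : m = k
  · subst hmk
    simp only [massTransfer_apply_right hjk, tTransform, Equiv.swap_apply_right]
    linarith
  · simp only [massTransfer_apply_of_ne hmj hmk, tTransform, Equiv.swap_apply_of_ne_of_ne hmj hmk]
    ring

end Transfers

section DiffSet

variable {ι : Type*} [Fintype ι]

def diffSet (p q : ι → ℝ) : Finset ι := Finset.univ.filter fun m => p m ≠ q m

lemma mem_diffSet {p q : ι → ℝ} {m : ι} : m ∈ diffSet p q ↔ p m ≠ q m := by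
  simp [diffSet]

lemma card_diffSet_ne_one {p q : ι → ℝ} (h : ∑ m, p m = ∑ m, q m) : (diffSet p q).card ≠ 1 := by
  intro h1
  obtain ⟨i, hi⟩ := Finset.card_eq_one.mp h1
  have hsum : ∑ m ∈ diffSet p q, (p m - q m) = 0 := by
    rw [diffSet, Finset.sum_filter_of_ne fun m _ hm => sub_ne_zero.mp hm, Finset.sum_sub_distrib,
      h, sub_self]
  have hpi : p i ≠ q i := mem_diffSet.mp (hi ▸ Finset.mem_singleton_self i)
  rw [hi, Finset.sum_singleton] at hsum
  exact hpi (sub_eq_zero.mp hsum)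

lemma card_diffSet_lt {p q q' : ι → ℝ} {j k : ι} (hj : p j ≠ q j) (hk : p k ≠ q k)
    (hoff : ∀ m, m ≠ j → m ≠ k → q' m = q m) (hfix : p j = q' j ∨ p k = q' k) :
    (diffSet p q').card < (diffSet p q).card := by
  have hsub : diffSet p q' ⊆ diffSet p q := by
    intro m hm
    by_cases hmj : m = j
    · exact hmj ▸ mem_diffSet.mpr hj
    by_cases hmk : m = k
    · exact hmk ▸ mem_diffSet.mpr hk
    simpa [mem_diffSet, hoff m hmj hmk] using hm
  refine Finset.card_lt_card ((Finset.ssubset_iff_of_subset hsub).mpr ?_)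
  rcases hfix with hfix | hfix
  · exact ⟨j, mem_diffSet.mpr hj, fun h => mem_diffSet.mp h hfix⟩
  · exact ⟨k, mem_diffSet.mpr hk, fun h => mem_diffSet.mp h hfix⟩

end DiffSet

section Majorization

variable {M : ℕ}

def prefixSum (f : Fin M → ℝ) (K : ℕ) : ℝ :=
  ∑ i ∈ Finset.univ.filter (fun i : Fin M => (i : ℕ) < K), f i

lemma prefixSum_sub (f g : Fin M → ℝ) (K : ℕ) :
    prefixSum (f - g) K = prefixSum f K - prefixSum g K :=
  Finset.sum_sub_distrib _ _

lemma prefixSum_massTransfer (q : Fin M → ℝ) (j k : Fin M) (δ : ℝ) (K : ℕ) :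
    prefixSum (massTransfer q j k δ) K =
      prefixSum q K - (if (j : ℕ) < K then δ else 0) + (if (k : ℕ) < K then δ else 0) := by
  simp [prefixSum, massTransfer, Finset.sum_add_distrib, Finset.sum_sub_distrib,
    Finset.sum_pi_single']

lemma prefixSum_succ (f : Fin M → ℝ) (i : Fin M) :
    prefixSum f (i + 1) = prefixSum f i + f i := by
  have hset : Finset.univ.filter (fun m : Fin M => (m : ℕ) < i + 1) =
      insert i (Finset.univ.filter fun m : Fin M => (m : ℕ) < i) := by
    ext m
    simp only [Finset.mem_filter, Finset.mem_univ, true_and, Finset.mem_insert, Fin.ext_iff]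
    omega
  rw [prefixSum, hset, Finset.sum_insert (by simp), prefixSum, add_comm]

lemma prefixSum_eq_of_eq_zero {f : Fin M → ℝ} {K₁ K₂ : ℕ} (hK : K₁ ≤ K₂)
    (hf : ∀ i : Fin M, K₁ ≤ i → (i : ℕ) < K₂ → f i = 0) : prefixSum f K₂ = prefixSum f K₁ := by
  refine (Finset.sum_subset (fun i hi => ?_) fun i hi hi' => ?_).symm
  · simp only [Finset.mem_filter, Finset.mem_univ, true_and] at hi ⊢
    omega
  · simp only [Finset.mem_filter, Finset.mem_univ, true_and, not_lt] at hi hi'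
    exact hf i hi' hi

variable {p q : Fin M → ℝ}

lemma exists_last_lt (hsum : ∑ m, p m = ∑ m, q m) (hne : p ≠ q) :
    ∃ j, p j < q j ∧ ∀ i, j < i → q i ≤ p i := by
  have hS : (Finset.univ.filter fun i => p i < q i).Nonempty := by
    by_contra hS
    rw [Finset.not_nonempty_iff_eq_empty, Finset.filter_eq_empty_iff] at hS
    have hle : ∀ i ∈ Finset.univ, q i ≤ p i := fun i hi => not_lt.mp (hS hi)
    exact hne (funext fun i =>
      ((Finset.sum_eq_sum_iff_of_le hle).mp hsum.symm i (Finset.mem_univ i)).symm)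
  refine ⟨_, (Finset.mem_filter.mp (Finset.max'_mem _ hS)).2, fun i hi => ?_⟩
  by_contra hlt
  exact (Finset.le_max' _ i (by simpa using lt_of_not_ge hlt)).not_gt hi

lemma exists_first_lt_after (hsum : ∑ m, p m = ∑ m, q m) (hmaj : MajorizesDesc q p) {j : Fin M}
    (hj : p j < q j) (hlast : ∀ i, j < i → q i ≤ p i) :
    ∃ k, j < k ∧ q k < p k ∧ ∀ i, j < i → i < k → p i = q i := by
  have hhead : prefixSum p (j + 1) < prefixSum q (j + 1) := by
    have hprefix : prefixSum p j ≤ prefixSum q j := hmaj j j.is_lt.le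
    rw [prefixSum_succ, prefixSum_succ]
    linarith
  have htail : ∃ i ∈ Finset.univ.filter (fun i : Fin M => ¬ (i : ℕ) < j + 1), q i < p i := by
    refine Finset.exists_lt_of_sum_lt ?_
    have hp := Finset.sum_filter_add_sum_filter_not Finset.univ (fun i : Fin M => (i : ℕ) < j + 1) p
    have hq := Finset.sum_filter_add_sum_filter_not Finset.univ (fun i : Fin M => (i : ℕ) < j + 1) q
    rw [prefixSum, prefixSum] at hhead
    linarith
  have hT : (Finset.univ.filter fun i => j < i ∧ q i < p i).Nonempty := by
    obtain ⟨i, hi, hqp⟩ := htail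
    simp only [Finset.mem_filter, Finset.mem_univ, true_and, not_lt] at hi
    exact ⟨i, Finset.mem_filter.mpr ⟨Finset.mem_univ i, Fin.lt_def.mpr (by omega), hqp⟩⟩
  obtain ⟨hjk, hk⟩ := (Finset.mem_filter.mp (Finset.min'_mem _ hT)).2
  refine ⟨_, hjk, hk, fun i hji hik => le_antisymm ?_ (hlast i hji)⟩
  by_contra hlt
  exact (Finset.min'_le _ i (by simpa [hji] using lt_of_not_ge hlt)).not_gt hik

end Majorization

section RobinHood

variable {M : ℕ} {p q : Fin M → ℝ} {j k : Fin M} {δ : ℝ}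

lemma antitone_massTransfer (hp : Antitone p) (hq : Antitone q) (hjk : j < k) (hδ : 0 ≤ δ)
    (hδj : δ ≤ q j - p j) (hδk : δ ≤ p k - q k) (hmid : ∀ i, j < i → i < k → p i = q i) :
    Antitone (massTransfer q j k δ) := by
  have hq'j := massTransfer_apply_left (q := q) (δ := δ) hjk.ne
  have hq'k := massTransfer_apply_right (q := q) (δ := δ) hjk.ne
  have hq'off : ∀ m, m ≠ j → m ≠ k → massTransfer q j k δ m = q m :=
    fun m => massTransfer_apply_of_ne
  set q' := massTransfer q j k δ
  have hle : ∀ m, m ≠ k → q' m ≤ q m := fun m hmk => by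
    by_cases hmj : m = j
    · rw [hmj, hq'j]; linarith
    · rw [hq'off m hmj hmk]
  have hge : ∀ m, m ≠ j → q m ≤ q' m := fun m hmj => by
    by_cases hmk : m = k
    · rw [hmk, hq'k]; linarith
    · rw [hq'off m hmj hmk]
  have hj : p j ≤ q' j := by rw [hq'j]; linarith
  have hk : q' k ≤ p k := by rw [hq'k]; linarith
  have hkj : q' k ≤ q' j := hk.trans ((hp hjk.le).trans hj)
  intro i i' hii'
  rcases hii'.eq_or_lt with rfl | hlt
  · rfl
  by_cases hi : i = j <;> by_cases hi' : i' = k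
  · rw [hi, hi']; exact hkj
  · subst hi
    rcases lt_or_gt_of_ne hi' with h | h
    · calc q' i' ≤ q i' := hle i' hi'
        _ = p i' := (hmid i' hlt h).symm
        _ ≤ p i := hp hlt.le
        _ ≤ q' i := hj
    · calc q' i' ≤ q i' := hle i' hi'
        _ ≤ q k := hq h.le
        _ ≤ q' k := hge k hjk.ne'
        _ ≤ q' i := hkj
  · subst hi'
    rcases lt_or_gt_of_ne hi with h | h
    · calc q' i' ≤ q' j := hkj
        _ ≤ q j := hle j hjk.ne
        _ ≤ q i := hq h.le
        _ ≤ q' i := hge i hi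
    · calc q' i' ≤ p i' := hk
        _ ≤ p i := hp hlt.le
        _ = q i := hmid i h hlt
        _ ≤ q' i := hge i hi
  · calc q' i' ≤ q i' := hle i' hi'
      _ ≤ q i := hq hlt.le
      _ ≤ q' i := hge i hi

lemma majorizesDesc_massTransfer (hmaj : MajorizesDesc q p) (hjk : j < k)
    (hδj : δ ≤ q j - p j) (hmid : ∀ i, j < i → i < k → p i = q i) :
    MajorizesDesc (massTransfer q j k δ) p := by
  intro K hK
  change prefixSum p K ≤ prefixSum (massTransfer q j k δ) K
  have hpq : prefixSum p K ≤ prefixSum q K := hmaj K hK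
  rw [prefixSum_massTransfer]
  by_cases hjK : (j : ℕ) < K
  · by_cases hkK : (k : ℕ) < K
    · simp only [if_pos hjK, if_pos hkK]
      linarith
    -- between `j` and `K` the vectors agree, so the surplus of `q` over `p` is at least `q j - p j`
    have hsurplus : q j - p j ≤ prefixSum (q - p) K := by
      have hprefix : prefixSum p j ≤ prefixSum q j := hmaj j j.is_lt.le
      rw [prefixSum_eq_of_eq_zero hjK fun i hji hiK => ?_, prefixSum_succ, prefixSum_sub]
      · simp only [Pi.sub_apply]
        linarith
      · rw [Pi.sub_apply, hmid i (Fin.lt_def.mpr (by omega)) (Fin.lt_def.mpr (by omega)), sub_self]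
    rw [prefixSum_sub] at hsurplus
    simp only [if_pos hjK, if_neg hkK]
    linarith
  · have hkK : ¬ (k : ℕ) < K := fun h => hjK ((Fin.lt_def.mp hjk).trans h)
    simp only [if_neg hjK, if_neg hkK]
    linarith

end RobinHood

theorem exists_tTransform_majorizesDesc {M : ℕ} {p q : Fin M → ℝ} (hp : Antitone p)
    (hq : Antitone q) (hsum : ∑ m, p m = ∑ m, q m) (hmaj : MajorizesDesc q p) (hne : p ≠ q) :
    ∃ (t : ℝ) (σ : Equiv.Perm (Fin M)), 0 ≤ t ∧ t ≤ 1 ∧ Antitone (tTransform t σ q) ∧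
      MajorizesDesc (tTransform t σ q) p ∧
      (diffSet p (tTransform t σ q)).card < (diffSet p q).card := by
  obtain ⟨j, hj, hlast⟩ := exists_last_lt hsum hne
  obtain ⟨k, hjk, hk, hmid⟩ := exists_first_lt_after hsum hmaj hj hlast
  set δ := min (q j - p j) (p k - q k)
  have hδj : δ ≤ q j - p j := min_le_left _ _
  have hδk : δ ≤ p k - q k := min_le_right _ _
  have hδ : 0 ≤ δ := le_min (by linarith) (by linarith)
  obtain ⟨t, ht0, ht1, ht⟩ :=
    exists_massTransfer_eq_tTransform hjk.ne hδ (by linarith [hp hjk.le])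
  refine ⟨t, _, ht0, ht1, ht ▸ antitone_massTransfer hp hq hjk hδ hδj hδk hmid,
    ht ▸ majorizesDesc_massTransfer hmaj hjk hδj hmid, ht ▸ ?_⟩
  refine card_diffSet_lt hj.ne hk.ne' (fun m => massTransfer_apply_of_ne) ?_
  rw [massTransfer_apply_left hjk.ne, massTransfer_apply_right hjk.ne]
  rcases min_choice (q j - p j) (p k - q k) with h | h
  · left; linarith
  · right; linarith

lemma projVec_smul {ι : Type*} (c : ℂ) (ψ : ι → ℂ) :
    projVec (c • ψ) = (c * star c) • projVec ψ := by
  ext i j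
  simp only [projVec, of_apply, Pi.smul_apply, smul_eq_mul, star_mul', Matrix.smul_apply]
  ring

lemma mul_projVec_mul_conjTranspose {m n : Type*} [Fintype n] (A : Matrix m n ℂ) (ψ : n → ℂ) :
    A * projVec ψ * Aᴴ = projVec (A *ᵥ ψ) := by
  change A * vecMulVec ψ (star ψ) * Aᴴ = vecMulVec (A *ᵥ ψ) (star (A *ᵥ ψ))
  rw [mul_vecMulVec, vecMulVec_mul, star_mulVec]

lemma OrthonormalFam.comp_equiv {ι n : Type*} [Fintype n] {χ : ι → n → ℂ} (hχ : OrthonormalFam χ)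
    (σ : Equiv.Perm ι) : OrthonormalFam (χ ∘ σ) := fun i j => by
  simp [hχ (σ i) (σ j)]

section LocalOperators

variable {n : Type*} [Fintype n] [DecidableEq n]

def colMatrix (χ : n → n → ℂ) : Matrix n n ℂ := (Matrix.of χ)ᵀ

lemma colMatrix_mulVec_single (χ : n → n → ℂ) (m : n) (c : ℂ) :
    colMatrix χ *ᵥ Pi.single m c = c • χ m := by
  ext i
  simp [colMatrix, mul_comm]

variable {χ χ' : n → n → ℂ}

lemma conjTranspose_colMatrix_mul_self (hχ : OrthonormalFam χ) :
    (colMatrix χ)ᴴ * colMatrix χ = 1 := by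
  ext i j
  rw [one_apply]
  convert hχ i j using 2
  simp [colMatrix, mul_apply, cdot]

lemma colMatrix_mul_conjTranspose_self (hχ : OrthonormalFam χ) :
    colMatrix χ * (colMatrix χ)ᴴ = 1 :=
  mul_eq_one_comm.mp (conjTranspose_colMatrix_mul_self hχ)

lemma conjTranspose_colMatrix_mulVec (hχ : OrthonormalFam χ) (m : n) :
    (colMatrix χ)ᴴ *ᵥ χ m = Pi.single m 1 := by
  rw [← one_smul ℂ (χ m), ← colMatrix_mulVec_single, mulVec_mulVec,
    conjTranspose_colMatrix_mul_self hχ, one_mulVec]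

def basisMap (χ' χ : n → n → ℂ) (d : n → ℂ) : Matrix n n ℂ :=
  colMatrix χ' * diagonal d * (colMatrix χ)ᴴ

lemma basisMap_mulVec (hχ : OrthonormalFam χ) (d : n → ℂ) (m : n) :
    basisMap χ' χ d *ᵥ χ m = d m • χ' m := by
  rw [basisMap, ← mulVec_mulVec, conjTranspose_colMatrix_mulVec hχ, ← mulVec_mulVec,
    diagonal_mulVec_single, mul_one, colMatrix_mulVec_single]

lemma conjTranspose_basisMap_mul (hχ' : OrthonormalFam χ') (d e : n → ℂ) :
    (basisMap χ' χ d)ᴴ * basisMap χ' χ e = basisMap χ χ (star d * e) := by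
  simp only [basisMap, conjTranspose_mul, conjTranspose_conjTranspose, diagonal_conjTranspose,
    Matrix.mul_assoc]
  rw [← Matrix.mul_assoc (colMatrix χ')ᴴ, conjTranspose_colMatrix_mul_self hχ', Matrix.one_mul,
    ← Matrix.mul_assoc (diagonal _), diagonal_mul_diagonal]
  rfl

lemma basisMap_add (d e : n → ℂ) :
    basisMap χ' χ d + basisMap χ' χ e = basisMap χ' χ (d + e) := by
  rw [basisMap, basisMap, basisMap, ← Matrix.add_mul, ← Matrix.mul_add, diagonal_add]
  rfl

lemma basisMap_self_one (hχ : OrthonormalFam χ) : basisMap χ χ 1 = 1 := by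
  rw [basisMap, Pi.one_def, diagonal_one, Matrix.mul_one, colMatrix_mul_conjTranspose_self hχ]

lemma basisMap_one_mem_unitaryGroup (hχ : OrthonormalFam χ) (hχ' : OrthonormalFam χ') :
    basisMap χ' χ 1 ∈ unitaryGroup n ℂ := by
  rw [mem_unitaryGroup_iff', star_eq_conjTranspose, conjTranspose_basisMap_mul hχ', star_one,
    one_mul, basisMap_self_one hχ]

lemma conjTranspose_basisMap_mul_add_eq_one {χ₁ χ₂ : n → n → ℂ} (hχ : OrthonormalFam χ)
    (hχ₁ : OrthonormalFam χ₁) (hχ₂ : OrthonormalFam χ₂) {x y : n → ℝ}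
    (hxy : ∀ m, x m ^ 2 + y m ^ 2 = 1) :
    (basisMap χ₁ χ fun m => (x m : ℂ))ᴴ * basisMap χ₁ χ (fun m => (x m : ℂ)) +
      (basisMap χ₂ χ fun m => (y m : ℂ))ᴴ * basisMap χ₂ χ (fun m => (y m : ℂ)) = 1 := by
  rw [conjTranspose_basisMap_mul hχ₁, conjTranspose_basisMap_mul hχ₂, basisMap_add,
    ← basisMap_self_one hχ]
  congr 1
  ext m
  simp only [Pi.add_apply, Pi.mul_apply, Pi.star_apply, Complex.star_def, Complex.conj_ofReal,
    Pi.one_apply, ← sq]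
  exact_mod_cast hxy m

end LocalOperators

section SchmidtVectors

variable {a b : ℕ}

lemma tensorVec_smul_smul (α β : ℂ) (u : Fin a → ℂ) (v : Fin b → ℂ) :
    tensorVec (α • u) (β • v) = (α * β) • tensorVec u v := by
  ext i
  simp only [tensorVec, Pi.smul_apply, smul_eq_mul]
  ring

lemma kronecker_mulVec_tensorVec (A : Matrix (Fin a) (Fin a) ℂ) (B : Matrix (Fin b) (Fin b) ℂ)
    (u : Fin a → ℂ) (v : Fin b → ℂ) :
    (A ⊗ₖ B) *ᵥ tensorVec u v = tensorVec (A *ᵥ u) (B *ᵥ v) := by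
  ext ⟨i, j⟩
  simp only [mulVec, dotProduct, tensorVec, kroneckerMap_apply, Fintype.sum_prod_type,
    Finset.sum_mul_sum]
  exact Finset.sum_congr rfl fun k _ => Finset.sum_congr rfl fun l _ => by ring

variable {ι : Type*} [Fintype ι]

def schmidtVec (χ : ι → Fin a → ℂ) (κ : ι → Fin b → ℂ) (c : ι → ℂ) : Fin a × Fin b → ℂ :=
  ∑ m, c m • tensorVec (χ m) (κ m)

lemma schmidtVec_smul (χ : ι → Fin a → ℂ) (κ : ι → Fin b → ℂ) (s : ℂ) (c : ι → ℂ) :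
    schmidtVec χ κ (s • c) = s • schmidtVec χ κ c := by
  simp only [schmidtVec, Finset.smul_sum, Pi.smul_apply, smul_eq_mul, smul_smul]

lemma schmidtVec_comp_equiv (χ : ι → Fin a → ℂ) (κ : ι → Fin b → ℂ) (c : ι → ℂ)
    (σ : Equiv.Perm ι) : schmidtVec (χ ∘ σ) (κ ∘ σ) (c ∘ σ) = schmidtVec χ κ c :=
  Equiv.sum_comp σ fun m => c m • tensorVec (χ m) (κ m)

lemma kronecker_mulVec_schmidtVec {χ χ' : ι → Fin a → ℂ} {κ κ' : ι → Fin b → ℂ}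
    {A : Matrix (Fin a) (Fin a) ℂ} {B : Matrix (Fin b) (Fin b) ℂ} {α β : ι → ℂ}
    (hA : ∀ m, A *ᵥ χ m = α m • χ' m) (hB : ∀ m, B *ᵥ κ m = β m • κ' m) (c : ι → ℂ) :
    (A ⊗ₖ B) *ᵥ schmidtVec χ κ c = schmidtVec χ' κ' (α * β * c) := by
  simp only [schmidtVec, mulVec_sum, mulVec_smul, kronecker_mulVec_tensorVec, hA, hB,
    tensorVec_smul_smul, smul_smul, Pi.mul_apply, mul_comm (c _)]

def schmidtState (χ : ι → Fin a → ℂ) (κ : ι → Fin b → ℂ) (p : ι → ℝ) :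
    Matrix (Fin a × Fin b) (Fin a × Fin b) ℂ :=
  projVec (schmidtVec χ κ fun m => (√(p m) : ℂ))

end SchmidtVectors

lemma exists_sq_add_sq_eq_one_mul_sqrt {a b : ℝ} (ha : 0 ≤ a) (hb : 0 ≤ b) :
    ∃ x y : ℝ, x ^ 2 + y ^ 2 = 1 ∧ x * √(a + b) = √a ∧ y * √(a + b) = √b := by
  rcases (add_nonneg ha hb).eq_or_lt with hab | hab
  · obtain ⟨rfl, rfl⟩ := (add_eq_zero_iff_of_nonneg ha hb).mp hab.symm
    exact ⟨1, 0, by norm_num, by simp, by simp⟩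
  have hs : √(a + b) ≠ 0 := (Real.sqrt_pos.mpr hab).ne'
  refine ⟨√a / √(a + b), √b / √(a + b), ?_, div_mul_cancel₀ _ hs, div_mul_cancel₀ _ hs⟩
  rw [div_pow, div_pow, ← add_div, Real.sq_sqrt ha, Real.sq_sqrt hb, Real.sq_sqrt hab.le,
    div_self hab.ne']

def IsLocalTwoKraus {a b : ℕ}
    (Λ : Matrix (Fin a × Fin b) (Fin a × Fin b) ℂ → Matrix (Fin a × Fin b) (Fin a × Fin b) ℂ) :
    Prop :=
  ∃ C D : Matrix (Fin a) (Fin a) ℂ, ∃ U V : Matrix (Fin b) (Fin b) ℂ,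
    U ∈ unitaryGroup (Fin b) ℂ ∧ V ∈ unitaryGroup (Fin b) ℂ ∧ Cᴴ * C + Dᴴ * D = 1 ∧
    ∀ ω, Λ ω = (C ⊗ₖ U) * ω * (C ⊗ₖ U)ᴴ + (D ⊗ₖ V) * ω * (D ⊗ₖ V)ᴴ

theorem exists_isLocalTwoKraus_schmidtState_tTransform {M : ℕ} {χ κ : Fin M → Fin M → ℂ}
    (hχ : OrthonormalFam χ) (hκ : OrthonormalFam κ) {r : Fin M → ℝ} (hr : ∀ m, 0 ≤ r m)
    (σ : Equiv.Perm (Fin M)) {t : ℝ} (ht0 : 0 ≤ t) (ht1 : t ≤ 1) :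
    ∃ Λ, IsLocalTwoKraus Λ ∧
      Λ (schmidtState χ κ (tTransform t σ r)) = schmidtState χ κ r := by
  choose x y hxy hx hy using fun m =>
    exists_sq_add_sq_eq_one_mul_sqrt (mul_nonneg ht0 (hr m))
      (mul_nonneg (sub_nonneg.mpr ht1) (hr (σ m)))
  set C := basisMap χ χ fun m => (x m : ℂ)
  set D := basisMap (χ ∘ σ) χ fun m => (y m : ℂ)
  set V := basisMap (κ ∘ σ) κ 1
  refine ⟨_, ⟨C, D, 1, V, one_mem _, basisMap_one_mem_unitaryGroup hκ (hκ.comp_equiv σ),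
    conjTranspose_basisMap_mul_add_eq_one hχ hχ (hχ.comp_equiv σ) hxy, fun ω => rfl⟩, ?_⟩
  have hC : (C ⊗ₖ 1) *ᵥ schmidtVec χ κ (fun m => (√(tTransform t σ r m) : ℂ)) =
      (√t : ℂ) • schmidtVec χ κ fun m => (√(r m) : ℂ) := by
    rw [kronecker_mulVec_schmidtVec (fun m => basisMap_mulVec hχ _ m)
      (fun m => (one_mulVec (κ m)).trans (one_smul ℂ (κ m)).symm), ← schmidtVec_smul]
    congr 1
    ext m
    simp only [Pi.mul_apply, Pi.smul_apply, smul_eq_mul, mul_one, ← Complex.ofReal_mul,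
      tTransform, hx, Real.sqrt_mul ht0]
  have hD : (D ⊗ₖ V) *ᵥ schmidtVec χ κ (fun m => (√(tTransform t σ r m) : ℂ)) =
      (√(1 - t) : ℂ) • schmidtVec χ κ fun m => (√(r m) : ℂ) := by
    rw [kronecker_mulVec_schmidtVec (fun m => basisMap_mulVec hχ _ m)
      (fun m => basisMap_mulVec hκ _ m), ← schmidtVec_comp_equiv χ κ _ σ, ← schmidtVec_smul]
    congr 1
    ext m
    simp only [Pi.mul_apply, Pi.smul_apply, Function.comp_apply, smul_eq_mul,
      mul_one, ← Complex.ofReal_mul, tTransform, hy, Real.sqrt_mul (sub_nonneg.mpr ht1)]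
  simp only [schmidtState, mul_projVec_mul_conjTranspose, hC, hD, projVec_smul, ← add_smul,
    Complex.star_def, Complex.conj_ofReal, ← Complex.ofReal_mul,
    Real.mul_self_sqrt ht0, Real.mul_self_sqrt (sub_nonneg.mpr ht1)]
  norm_num

lemma composeFam_cons {α : Type*} {N : ℕ} (f : α → α) (fs : Fin N → α → α) :
    composeFam (N + 1) (Fin.cons f fs) = f ∘ composeFam N fs :=
  rfl

theorem exists_isLocalTwoKraus_composeFam {M : ℕ} {χ κ : Fin M → Fin M → ℂ}
    (hχ : OrthonormalFam χ) (hκ : OrthonormalFam κ) {p q : Fin M → ℝ} (hp : Antitone p)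
    (hq0 : ∀ m, 0 ≤ q m) (hq : Antitone q) (hsum : ∑ m, p m = ∑ m, q m)
    (hmaj : MajorizesDesc q p) :
    ∃ N ≤ (diffSet p q).card - 1, ∃ Λs : Fin N → (Matrix (Fin M × Fin M) (Fin M × Fin M) ℂ →
        Matrix (Fin M × Fin M) (Fin M × Fin M) ℂ),
      (∀ i, IsLocalTwoKraus (Λs i)) ∧
        composeFam N Λs (schmidtState χ κ p) = schmidtState χ κ q := by
  induction hn : (diffSet p q).card using Nat.strong_induction_on generalizing q with
  | _ n ih =>
  by_cases hpq : p = q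
  · exact ⟨0, Nat.zero_le _, Fin.elim0, fun i => i.elim0, hpq ▸ rfl⟩
  obtain ⟨t, σ, ht0, ht1, hq', hmaj', hcard'⟩ := exists_tTransform_majorizesDesc hp hq hsum hmaj hpq
  obtain ⟨N, hN, Λs, hΛs, hcomp⟩ := ih _ (hn ▸ hcard') (tTransform_nonneg hq0 σ ht0 ht1) hq'
    (hsum.trans (sum_tTransform t σ q).symm) hmaj' rfl
  obtain ⟨Λ, hΛ, hΛq⟩ := exists_isLocalTwoKraus_schmidtState_tTransform hχ hκ hq0 σ ht0 ht1
  have hn1 : n ≠ 1 := hn ▸ card_diffSet_ne_one hsum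
  refine ⟨N + 1, by omega, Fin.cons Λ Λs, Fin.cases hΛ hΛs, ?_⟩
  rw [composeFam_cons, Function.comp_apply, hcomp, hΛq]

end

theorem nielsen_hard_direction_general (M : ℕ) (hM : 1 ≤ M) (χ κ : Fin M → Fin M → ℂ)
    (hχ : OrthonormalFam χ) (hκ : OrthonormalFam κ)
    (p q : Fin M → ℝ) (hq0 : ∀ m, 0 ≤ q m)
    (hpmono : Antitone p) (hqmono : Antitone q)
    (hp1 : ∑ m, p m = 1) (hq1 : ∑ m, q m = 1)
    (hmaj : MajorizesDesc q p) :
    ∃ N : ℕ, N < M ∧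
      ∃ Λs : Fin N → (Matrix (Fin M × Fin M) (Fin M × Fin M) ℂ →
          Matrix (Fin M × Fin M) (Fin M × Fin M) ℂ),
        (∀ k : Fin N, ∃ C D U V : Matrix (Fin M) (Fin M) ℂ,
          U ∈ Matrix.unitaryGroup (Fin M) ℂ ∧ V ∈ Matrix.unitaryGroup (Fin M) ℂ ∧
          Cᴴ * C + Dᴴ * D = 1 ∧
          ∀ ω, Λs k ω = (C ⊗ₖ U) * ω * (C ⊗ₖ U)ᴴ + (D ⊗ₖ V) * ω * (D ⊗ₖ V)ᴴ) ∧
        composeFam N Λs (projVec (∑ m, (Real.sqrt (p m) : ℂ) • tensorVec (χ m) (κ m))) =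
          projVec (∑ m, (Real.sqrt (q m) : ℂ) • tensorVec (χ m) (κ m)) := by
  obtain ⟨N, hN, Λs, hΛs, hcomp⟩ := exists_isLocalTwoKraus_composeFam hχ hκ hpmono hq0
    hqmono (hp1.trans hq1.symm) hmaj
  have hcard : (diffSet p q).card ≤ M := (Finset.card_le_univ _).trans_eq (Fintype.card_fin M)
  exact ⟨N, by omega, Λs, hΛs, hcomp⟩

/-- The hard direction of Nielsen's theorem: if `q` majorizes `p` then `|Ψ⟩⟨Ψ|` is converted
into `|Φ⟩⟨Φ|` by a composition of `N < M` completely positive maps, each having two Kraus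
operators of the local form `C⊗U`, `D⊗V` with `U, V` unitary and `CᴴC + DᴴD = 1`. -/
theorem nielsen_hard_direction (M : ℕ) (hM : 1 ≤ M) (χ κ : Fin M → Fin M → ℂ)
    (hχ : OrthonormalFam χ) (hκ : OrthonormalFam κ)
    (p q : Fin M → ℝ) (hp0 : ∀ m, 0 ≤ p m) (hq0 : ∀ m, 0 ≤ q m)
    (hpmono : Antitone p) (hqmono : Antitone q)
    (hp1 : ∑ m, p m = 1) (hq1 : ∑ m, q m = 1)
    (hmaj : MajorizesDesc q p) :
    ∃ N : ℕ, N < M ∧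
      ∃ Λs : Fin N → (Matrix (Fin M × Fin M) (Fin M × Fin M) ℂ →
          Matrix (Fin M × Fin M) (Fin M × Fin M) ℂ),
        (∀ k : Fin N, ∃ C D U V : Matrix (Fin M) (Fin M) ℂ,
          U ∈ Matrix.unitaryGroup (Fin M) ℂ ∧ V ∈ Matrix.unitaryGroup (Fin M) ℂ ∧
          Cᴴ * C + Dᴴ * D = 1 ∧
          ∀ ω, Λs k ω = (C ⊗ₖ U) * ω * (C ⊗ₖ U)ᴴ + (D ⊗ₖ V) * ω * (D ⊗ₖ V)ᴴ) ∧
        composeFam N Λs (projVec (∑ m, (Real.sqrt (p m) : ℂ) • tensorVec (χ m) (κ m))) =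
          projVec (∑ m, (Real.sqrt (q m) : ℂ) • tensorVec (χ m) (κ m)) :=
  nielsen_hard_direction_general M hM χ κ hχ hκ p q hq0 hpmono hqmono hp1 hq1 hmaj
end

section
/- Let x₁, x₂ ∈ [0, 1] with x₁ + x₂ = 1, let L ∈ ℝ and C > 0, and let g : ℕ → ℝ satisfy |g(k) − L| ≤ C for all k ≥ 1 and g(k) → L as k → ∞. Then (1/n)·∑_{k=0}^{n} (n choose k)·x₁^k·x₂^{n−k}·k·g(k) → x₁·L as n → ∞. -/
open scoped BigOperators Classical ComplexOrder
open Matrix Kronecker Filter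

/-! The weights `w n k = (n choose k) x₁^k x₂^(n-k) k / n` are nonnegative, sum to `x₁` (the
mean of the binomial distribution is `n x₁`), and each is at most `k / n`, hence tends to `0` as
`n → ∞`. As in the Silverman–Toeplitz theorem, such weights transport the limit of `g`: the
finitely many `k` below a threshold carry vanishing total weight, and beyond the threshold `g k`
is close to `L`. -/

open Finset Topology

theorem tendsto_sum_mul_of_tendsto_zero {ι : Type*} {l : Filter ι} {s : ι → Finset ℕ}
    {w : ι → ℕ → ℝ} {h : ℕ → ℝ} {B : ℝ} (hw : ∀ i k, 0 ≤ w i k)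
    (hB : ∀ᶠ i in l, ∑ k ∈ s i, w i k ≤ B) (hcol : ∀ k, Tendsto (fun i => w i k) l (𝓝 0))
    (hh : Tendsto h atTop (𝓝 0)) :
    Tendsto (fun i => ∑ k ∈ s i, w i k * h k) l (𝓝 0) := by
  rw [Metric.tendsto_nhds]
  intro ε hε
  obtain ⟨δ, hδ, hBδ⟩ := exists_pos_mul_lt (half_pos hε) B
  obtain ⟨K, hK⟩ : ∃ K, ∀ k ≥ K, |h k| ≤ δ := by
    simpa [Real.dist_eq] using (Metric.tendsto_atTop.mp hh δ hδ).imp fun _ H k hk => (H k hk).le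
  have hhead : Tendsto (fun i => ∑ k ∈ range K, w i k * |h k|) l (𝓝 0) := by
    simpa using tendsto_finsetSum (range K) fun k _ => (hcol k).mul_const |h k|
  filter_upwards [hB, hhead.eventually (gt_mem_nhds (half_pos hε))] with i hBi hheadi
  have htail : ∑ k ∈ s i with ¬k < K, w i k * |h k| ≤ B * δ :=
    calc ∑ k ∈ s i with ¬k < K, w i k * |h k|
        ≤ ∑ k ∈ s i with ¬k < K, w i k * δ :=
          sum_le_sum fun k hk => mul_le_mul_of_nonneg_left
            (hK k (not_lt.mp (mem_filter.mp hk).2)) (hw i k)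
      _ ≤ ∑ k ∈ s i, w i k * δ :=
          sum_le_sum_of_subset_of_nonneg (filter_subset _ _) fun k _ _ => by
            have := hw i k; positivity
      _ ≤ B * δ := by rw [← sum_mul]; exact mul_le_mul_of_nonneg_right hBi hδ.le
  have hfront : ∑ k ∈ s i with k < K, w i k * |h k| ≤ ∑ k ∈ range K, w i k * |h k| :=
    sum_le_sum_of_subset_of_nonneg (fun k hk => mem_range.mpr (mem_filter.mp hk).2)
      fun k _ _ => by have := hw i k; positivity
  rw [Real.dist_eq, sub_zero]
  calc |∑ k ∈ s i, w i k * h k| ≤ ∑ k ∈ s i, w i k * |h k| := by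
        refine (abs_sum_le_sum_abs _ _).trans_eq (sum_congr rfl fun k _ => ?_)
        rw [abs_mul, abs_of_nonneg (hw i k)]
    _ = ∑ k ∈ s i with k < K, w i k * |h k| + ∑ k ∈ s i with ¬k < K, w i k * |h k| :=
        (sum_filter_add_sum_filter_not _ _ _).symm
    _ < ε := by linarith

theorem tendsto_sum_mul_of_tendsto {ι : Type*} {l : Filter ι} {s : ι → Finset ℕ}
    {w : ι → ℕ → ℝ} {g : ℕ → ℝ} {a L : ℝ} (hw : ∀ i k, 0 ≤ w i k)
    (hsum : Tendsto (fun i => ∑ k ∈ s i, w i k) l (𝓝 a))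
    (hcol : ∀ k, Tendsto (fun i => w i k) l (𝓝 0)) (hg : Tendsto g atTop (𝓝 L)) :
    Tendsto (fun i => ∑ k ∈ s i, w i k * g k) l (𝓝 (a * L)) := by
  have hdev := tendsto_sum_mul_of_tendsto_zero hw (hsum.eventually (eventually_le_nhds
    (lt_add_one a))) hcol (tendsto_sub_nhds_zero_iff.mpr hg)
  simpa [mul_sub, sum_sub_distrib, ← sum_mul] using hdev.add (hsum.mul_const L)

theorem choose_mul_pow_mul_pow_le_one {R : Type*} [CommSemiring R] [PartialOrder R]
    [IsOrderedRing R] {x y : R} (hx : 0 ≤ x) (hy : 0 ≤ y) (hxy : x + y = 1) (n k : ℕ) :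
    (n.choose k : R) * x ^ k * y ^ (n - k) ≤ 1 := by
  rcases le_or_gt k n with hkn | hnk
  · calc (n.choose k : R) * x ^ k * y ^ (n - k)
        ≤ ∑ j ∈ range (n + 1), x ^ j * y ^ (n - j) * n.choose j := by
          rw [mul_rotate]
          exact single_le_sum (f := fun j => x ^ j * y ^ (n - j) * n.choose j)
            (fun j _ => by positivity) (mem_range_succ_iff.mpr hkn)
      _ = 1 := by rw [← add_pow, hxy, one_pow]
  · simp [Nat.choose_eq_zero_of_lt hnk]

theorem sum_range_choose_mul_pow_mul_pow_mul {R : Type*} [CommRing R] {x y : R}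
    (hxy : x + y = 1) (n : ℕ) :
    ∑ k ∈ range (n + 1), (n.choose k : R) * x ^ k * y ^ (n - k) * k = n * x := by
  obtain rfl : y = 1 - x := eq_sub_of_add_eq' hxy
  simpa [Polynomial.eval_finsetSum, bernsteinPolynomial, mul_comm]
    using congr_arg (Polynomial.eval x) (bernsteinPolynomial.sum_smul R n)

theorem binomial_average_tendsto_general (x₁ x₂ : ℝ) (hx₁ : 0 ≤ x₁ ∧ x₁ ≤ 1) (hx₂ : 0 ≤ x₂ ∧ x₂ ≤ 1)
    (hsum : x₁ + x₂ = 1) (L : ℝ) (g : ℕ → ℝ)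
    (hlim : Filter.Tendsto g Filter.atTop (nhds L)) :
    Filter.Tendsto (fun n : ℕ => (1 / (n : ℝ)) *
        ∑ k ∈ Finset.range (n + 1), (n.choose k : ℝ) * x₁ ^ k * x₂ ^ (n - k) * k * g k)
      Filter.atTop (nhds (x₁ * L)) := by
  set w : ℕ → ℕ → ℝ := fun n k => 1 / n * ((n.choose k : ℝ) * x₁ ^ k * x₂ ^ (n - k) * k)
  have hw : ∀ n k, 0 ≤ w n k := fun n k => by have := hx₁.1; have := hx₂.1; positivity
  have hrow : Tendsto (fun n => ∑ k ∈ range (n + 1), w n k) atTop (𝓝 x₁) := by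
    refine tendsto_const_nhds.congr' ((eventually_ne_atTop 0).mono fun n hn => ?_)
    simp only [w]
    rw [← mul_sum, sum_range_choose_mul_pow_mul_pow_mul hsum]
    field_simp
  have hcol : ∀ k, Tendsto (fun n => w n k) atTop (𝓝 0) := fun k => by
    have hle : ∀ n, w n k ≤ 1 / n * k := fun n =>
      mul_le_mul_of_nonneg_left (mul_le_of_le_one_left k.cast_nonneg
        (choose_mul_pow_mul_pow_le_one hx₁.1 hx₂.1 hsum n k)) (by positivity)
    exact squeeze_zero (hw · k) hle
      (by simpa using tendsto_one_div_atTop_nhds_zero_nat.mul_const (k : ℝ))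
  refine (tendsto_sum_mul_of_tendsto hw hrow hcol hlim).congr fun n => ?_
  rw [mul_sum]
  exact sum_congr rfl fun k _ => by ring

/-- The binomial averaging lemma: if `g(k) → L` with `|g(k) − L| ≤ C` for `k ≥ 1`, then
`(1/n) ∑ₖ (n choose k) x₁^k x₂^{n−k} k g(k) → x₁ L`. -/
theorem binomial_average_tendsto (x₁ x₂ : ℝ) (hx₁ : 0 ≤ x₁ ∧ x₁ ≤ 1) (hx₂ : 0 ≤ x₂ ∧ x₂ ≤ 1)
    (hsum : x₁ + x₂ = 1) (L C : ℝ) (hC : 0 < C) (g : ℕ → ℝ)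
    (hbdd : ∀ k : ℕ, 1 ≤ k → |g k - L| ≤ C)
    (hlim : Filter.Tendsto g Filter.atTop (nhds L)) :
    Filter.Tendsto (fun n : ℕ => (1 / (n : ℝ)) *
        ∑ k ∈ Finset.range (n + 1), (n.choose k : ℝ) * x₁ ^ k * x₂ ^ (n - k) * k * g k)
      Filter.atTop (nhds (x₁ * L)) :=
  binomial_average_tendsto_general x₁ x₂ hx₁ hx₂ hsum L g hlim
end
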